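/- The one-point compactification of Burke–van Douwen's space X (built from a ≤*-well-ordered unbounded family of strictly increasing functions of size 𝔟) is a compact, sequentially compact space of character 𝔟 that is not 2-sequentially compact. Consequently, 𝔟 equals the minimum character of a sequentially compact space that is not 2-sequentially compact. -/

import Mathlib

/-- `f ↾ [B]^n` converges to `p`. -/
def ConvergesOn {X : Type*} [TopologicalSpace X] (n : ℕ) (B : Set ℕ) (f : Finset ℕ → X)
    (p : X) : Prop :=
  ∀ U ∈ nhds p, ∃ F : Finset ℕ, ∀ s : Finset ℕ, s.card = n → ↑s ⊆ B \ ↑F → f s ∈ U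

/-- `X` is `n`-sequentially compact. -/
def NSeqCompact (n : ℕ) (X : Type*) [TopologicalSpace X] : Prop :=
  ∀ f : Finset ℕ → X, ∃ B : Set ℕ, B.Infinite ∧ ∃ p : X, ConvergesOn n B f p

/-- `f ≤* g` : eventual domination. -/
def LeStar (f g : ℕ → ℕ) : Prop := {n | g n < f n}.Finite

/-- The bounding number 𝔟. -/
noncomputable def bNumber : Cardinal :=
  sInf {c | ∃ F : Set (ℕ → ℕ), Cardinal.mk F = c ∧ ∀ g : ℕ → ℕ, ∃ f ∈ F, ¬ LeStar f g}

/-- The character of a point: least cardinality of a local base of open sets. -/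
noncomputable def pointCharacter {X : Type*} [TopologicalSpace X] (x : X) : Cardinal :=
  sInf {c | ∃ ℬ : Set (Set X), Cardinal.mk ℬ = c ∧ (∀ U ∈ ℬ, x ∈ U ∧ IsOpen U) ∧
    ∀ V ∈ nhds x, ∃ U ∈ ℬ, U ⊆ V}

/-- The character of a space. -/
noncomputable def spaceCharacter (X : Type*) [TopologicalSpace X] : Cardinal :=
  ⨆ x : X, pointCharacter x

/-- The Burke–van Douwen space built from a `≤*`-well-ordered unbounded family
`{f_i : i ∈ ι}` of strictly increasing functions (here `Sum.inl p` are the isolated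
points of `ω × ω` and `Sum.inr β` is the point `B_β = {(n,m) : m ≤ f_β(n)}`), with its
basic open sets. -/
def bvdTop (ι : Type) [LinearOrder ι] (f : ι → ℕ → ℕ) :
    TopologicalSpace ((ℕ × ℕ) ⊕ ι) :=
  TopologicalSpace.generateFrom (
    {U | ∃ p : ℕ × ℕ, U = {Sum.inl p}} ∪
    {U | ∃ (β : ι) (a : Option ι) (F : Set (ℕ × ℕ)), F.Finite ∧
         (∀ α : ι, a = some α → α < β) ∧
         U = {x | ∃ γ : ι, (∀ α : ι, a = some α → α < γ) ∧ γ ≤ β ∧ x = Sum.inr γ} ∪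
             {x | ∃ p : ℕ × ℕ, p.2 ≤ f β p.1 ∧
                  (∀ α : ι, a = some α → f α p.1 < p.2) ∧ p ∉ F ∧ x = Sum.inl p}})

open Set Filter Topology

set_option linter.unusedSectionVars false

section BNumber

open Set Cardinal

lemma bNumber_mem :
    ∃ F : Set (ℕ → ℕ), Cardinal.mk F = bNumber ∧ ∀ g : ℕ → ℕ, ∃ f ∈ F, ¬ LeStar f g := by
  have hne : {c | ∃ F : Set (ℕ → ℕ), Cardinal.mk F = c ∧
      ∀ g : ℕ → ℕ, ∃ f ∈ F, ¬ LeStar f g}.Nonempty := by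
    refine ⟨_, (Set.univ : Set (ℕ → ℕ)), rfl, fun g => ⟨fun n => g n + 1, Set.mem_univ _, fun h => ?_⟩⟩
    have heq : {n | g n < (fun n => g n + 1) n} = (Set.univ : Set ℕ) := by
      ext n
      simp only [Set.mem_setOf_eq, Set.mem_univ, iff_true]
      exact Nat.lt_succ_self _
    rw [LeStar, heq] at h
    exact Set.infinite_univ h
  exact csInf_mem hne

lemma aleph0_le_bNumber : Cardinal.aleph0 ≤ bNumber := by
  by_contra h
  push_neg at h
  obtain ⟨F, hF, hunb⟩ := bNumber_mem
  have hfin : F.Finite := Cardinal.lt_aleph0_iff_set_finite.1 (hF ▸ h)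
  classical
  set g : ℕ → ℕ := fun n => hfin.toFinset.sup (fun f => f n) with hg
  obtain ⟨f, hfF, hnf⟩ := hunb g
  refine hnf ?_
  have : {n | g n < f n} = ∅ := by
    ext n
    simp only [mem_setOf_eq, mem_empty_iff_false, iff_false, not_lt, hg]
    exact Finset.le_sup (f := fun f => f n) (hfin.mem_toFinset.2 hfF)
  rw [LeStar, this]
  exact finite_empty

lemma bNumber_pos : bNumber ≠ 0 := by
  intro h
  exact absurd (h ▸ aleph0_le_bNumber) (by simp [Cardinal.aleph0_ne_zero])

lemma bounded_of_mk_lt {G : Set (ℕ → ℕ)} (h : Cardinal.mk G < bNumber) :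
    ∃ g : ℕ → ℕ, ∀ h ∈ G, LeStar h g := by
  by_contra hb
  push_neg at hb
  have : bNumber ≤ Cardinal.mk G := by
    refine csInf_le (OrderBot.bddBelow _) ⟨G, rfl, fun g => ?_⟩
    obtain ⟨h', hh', hnh⟩ := hb g
    exact ⟨h', hh', hnh⟩
  exact absurd h (not_lt.2 this)

lemma mk_option_prod_finset_le {ι : Type} (hcard : Cardinal.mk ι = bNumber) :
    Cardinal.mk (Option ι × Finset (ℕ × ℕ)) ≤ bNumber := by
  have h1 : Cardinal.mk (Option ι) = bNumber := by
    rw [Cardinal.mk_option, hcard]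
    exact Cardinal.add_one_eq aleph0_le_bNumber
  have h2 : Cardinal.mk (Finset (ℕ × ℕ)) ≤ Cardinal.aleph0 := Cardinal.mk_le_aleph0
  calc Cardinal.mk (Option ι × Finset (ℕ × ℕ))
      = Cardinal.mk (Option ι) * Cardinal.mk (Finset (ℕ × ℕ)) := by
        rw [Cardinal.mk_prod, Cardinal.lift_id, Cardinal.lift_id]
    _ ≤ bNumber * Cardinal.aleph0 := mul_le_mul' h1.le h2
    _ = bNumber := by
        rw [Cardinal.mul_eq_max aleph0_le_bNumber le_rfl]
        exact max_eq_left aleph0_le_bNumber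

lemma mk_prod_finset_le {ι : Type} (hcard : Cardinal.mk ι = bNumber) :
    Cardinal.mk (ι × Finset (ℕ × ℕ)) ≤ bNumber := by
  refine le_trans ?_ (mk_option_prod_finset_le hcard)
  refine Cardinal.mk_le_of_injective (f := fun q : ι × Finset (ℕ × ℕ) => (some q.1, q.2)) ?_
  rintro ⟨a1, a2⟩ ⟨b1, b2⟩ hab
  simp only [Prod.mk.injEq, Option.some.injEq] at hab
  exact Prod.ext hab.1 hab.2

end BNumber

section Character

open Set Cardinal

variable {X : Type*} [TopologicalSpace X]

lemma pointCharacter_le {x : X} {ℬ : Set (Set X)}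
    (h1 : ∀ U ∈ ℬ, x ∈ U ∧ IsOpen U) (h2 : ∀ V ∈ nhds x, ∃ U ∈ ℬ, U ⊆ V) :
    pointCharacter x ≤ Cardinal.mk ℬ :=
  csInf_le (OrderBot.bddBelow _) ⟨ℬ, rfl, h1, h2⟩

lemma exists_pointCharacter_base (x : X) :
    ∃ ℬ : Set (Set X), Cardinal.mk ℬ = pointCharacter x ∧ (∀ U ∈ ℬ, x ∈ U ∧ IsOpen U) ∧
      ∀ V ∈ nhds x, ∃ U ∈ ℬ, U ⊆ V := by
  have hne : {c | ∃ ℬ : Set (Set X), Cardinal.mk ℬ = c ∧ (∀ U ∈ ℬ, x ∈ U ∧ IsOpen U) ∧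
      ∀ V ∈ nhds x, ∃ U ∈ ℬ, U ⊆ V}.Nonempty := by
    refine ⟨_, {U | x ∈ U ∧ IsOpen U}, rfl, fun U hU => hU, fun V hV => ?_⟩
    obtain ⟨t, hts, hto, hxt⟩ := mem_nhds_iff.mp hV
    exact ⟨t, ⟨hxt, hto⟩, hts⟩
  exact csInf_mem hne

lemma pointCharacter_le_spaceCharacter (x : X) : pointCharacter x ≤ spaceCharacter X :=
  le_ciSup (Cardinal.bddAbove_range _) x

end Character

namespace BvD

variable {ι : Type} [LinearOrder ι]

/-- The set `B_α`. -/
def Bset (f : ι → ℕ → ℕ) (α : ι) : Set (ℕ × ℕ) := {p | p.2 ≤ f α p.1}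

/-- `B_a` for `a : Option ι`, with `B_none = ∅`. -/
def BsetO (f : ι → ℕ → ℕ) : Option ι → Set (ℕ × ℕ)
  | none => ∅
  | some α => Bset f α

/-- `a < γ` for `a : Option ι`. -/
def ltO (a : Option ι) (γ : ι) : Prop := ∀ α : ι, a = some α → α < γ

/-- basic neighborhoods. -/
def core (f : ι → ℕ → ℕ) (a : Option ι) (β : ι) (F : Set (ℕ × ℕ)) : Set ((ℕ × ℕ) ⊕ ι) :=
  {x | ∃ γ : ι, (∀ α : ι, a = some α → α < γ) ∧ γ ≤ β ∧ x = Sum.inr γ} ∪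
  {x | ∃ p : ℕ × ℕ, p.2 ≤ f β p.1 ∧ (∀ α : ι, a = some α → f α p.1 < p.2) ∧ p ∉ F ∧
       x = Sum.inl p}

/-- the set `E α S`. -/
def E (S : Set (ℕ × ℕ)) (α : ι) : Set ((ℕ × ℕ) ⊕ ι) :=
  {x | ∃ γ : ι, γ ≤ α ∧ x = Sum.inr γ} ∪ Sum.inl '' S

variable {f : ι → ℕ → ℕ}

lemma inr_mem_core_iff {a : Option ι} {β γ : ι} {F : Set (ℕ × ℕ)} :
    Sum.inr γ ∈ core f a β F ↔ ltO a γ ∧ γ ≤ β := by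
  constructor
  · rintro (⟨γ', h1, h2, hh⟩ | ⟨p, -, -, -, hh⟩)
    · cases hh; exact ⟨h1, h2⟩
    · cases hh
  · rintro ⟨h1, h2⟩; exact Or.inl ⟨γ, h1, h2, rfl⟩

lemma inl_mem_core_iff {a : Option ι} {β : ι} {F : Set (ℕ × ℕ)} {p : ℕ × ℕ} :
    Sum.inl p ∈ core f a β F ↔ p ∈ Bset f β ∧ p ∉ BsetO f a ∧ p ∉ F := by
  constructor
  · rintro (⟨γ', -, -, hh⟩ | ⟨q, h1, h2, h3, hh⟩)
    · cases hh
    · cases hh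
      refine ⟨h1, ?_, h3⟩
      match a, h2 with
      | none, _ => exact notMem_empty _
      | some α, h2 => exact fun hb => absurd (h2 α rfl) (not_lt.2 hb)
  · rintro ⟨h1, h2, h3⟩
    refine Or.inr ⟨p, h1, ?_, h3, rfl⟩
    rintro α rfl
    exact lt_of_not_ge fun hb => h2 hb

lemma isOpen_singleton_inl (p : ℕ × ℕ) :
    letI := bvdTop ι f; IsOpen ({Sum.inl p} : Set ((ℕ × ℕ) ⊕ ι)) :=
  TopologicalSpace.GenerateOpen.basic _ (Or.inl ⟨p, rfl⟩)

lemma isOpen_core {a : Option ι} {β : ι} {F : Set (ℕ × ℕ)} (hF : F.Finite) (ha : ltO a β) :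
    letI := bvdTop ι f; IsOpen (core f a β F) :=
  TopologicalSpace.GenerateOpen.basic _ (Or.inr ⟨β, a, F, hF, ha, rfl⟩)

lemma inr_mem_E {S : Set (ℕ × ℕ)} {α γ : ι} (h : γ ≤ α) : Sum.inr γ ∈ E S α :=
  Or.inl ⟨γ, h, rfl⟩

lemma core_ne_F {a : Option ι} {β : ι} {F F' : Set (ℕ × ℕ)} (h : F' ⊆ F) :
    core f a β F ⊆ core f a β F' := by
  rintro x (hx | ⟨p, h1, h2, h3, h4⟩)
  · exact Or.inl hx
  · exact Or.inr ⟨p, h1, h2, fun hp => h3 (h hp), h4⟩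

/-- monotonicity of basic neighborhoods. -/
lemma core_subset_core {a a' : Option ι} {β β' : ι} {F' : Set (ℕ × ℕ)}
    (ha : ∀ α', a' = some α' → ∃ α, a = some α ∧ α' ≤ α) (hβ : β ≤ β') :
    core f a β (F' ∪ (Bset f β \ Bset f β') ∪ (BsetO f a' \ BsetO f a)) ⊆
      core f a' β' F' := by
  intro x hx
  match x with
  | Sum.inr γ =>
      obtain ⟨h1, h2⟩ := inr_mem_core_iff.1 hx
      refine inr_mem_core_iff.2 ⟨?_, h2.trans hβ⟩
      rintro α' rfl'
      obtain ⟨α, hα, hle⟩ := ha α' rfl'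
      exact lt_of_le_of_lt hle (h1 α hα)
  | Sum.inl p =>
      obtain ⟨h1, h2, h3⟩ := inl_mem_core_iff.1 hx
      refine inl_mem_core_iff.2 ⟨?_, ?_, ?_⟩
      · by_contra hb
        exact h3 (Or.inl (Or.inr ⟨h1, hb⟩))
      · intro hb
        exact h3 (Or.inr ⟨hb, h2⟩)
      · intro hb
        exact h3 (Or.inl (Or.inl hb))

lemma bset_diff_finite_of_leStar {α β : ι} (h : LeStar (f α) (f β)) :
    (Bset f α \ Bset f β).Finite := by
  have hsub : Bset f α \ Bset f β ⊆ ⋃ n ∈ {n | f β n < f α n}, {n} ×ˢ Iic (f α n) := by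
    rintro ⟨n, m⟩ ⟨h1, h2⟩
    simp only [mem_iUnion, mem_setOf_eq] at *
    exact ⟨n, lt_of_lt_of_le (lt_of_not_ge h2) h1, rfl, h1⟩
  exact ((h.biUnion fun n _ => (finite_singleton n).prod (finite_Iic _))).subset hsub

lemma merge_cases (a₁ a₂ : Option ι) : ∃ a : Option ι,
    (∀ α', a₁ = some α' → ∃ α, a = some α ∧ α' ≤ α) ∧
    (∀ α', a₂ = some α' → ∃ α, a = some α ∧ α' ≤ α) ∧
    (∀ β : ι, ltO a₁ β → ltO a₂ β → ltO a β) := by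
  rcases a₁ with _ | x <;> rcases a₂ with _ | y
  · exact ⟨none, fun α' h => (nomatch h), fun α' h => (nomatch h),
      fun β _ _ => fun α h => (nomatch h)⟩
  · refine ⟨some y, fun α' h => (nomatch h), fun α' h => ⟨y, rfl, le_of_eq (by injection h with h; exact h.symm)⟩,
      fun β _ h2 => h2⟩
  · refine ⟨some x, fun α' h => ⟨x, rfl, le_of_eq (by injection h with h; exact h.symm)⟩, fun α' h => (nomatch h),
      fun β h1 _ => h1⟩
  · refine ⟨some (max x y), fun α' h => ⟨max x y, rfl, ?_⟩, fun α' h => ⟨max x y, rfl, ?_⟩, ?_⟩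
    · injection h with h; exact h ▸ le_max_left _ _
    · injection h with h; exact h ▸ le_max_right _ _
    · rintro β h1 h2 α h
      injection h with h
      exact h ▸ max_lt (h1 x rfl) (h2 y rfl)

variable (hwo : ∀ i j : ι, i < j → LeStar (f i) (f j) ∧ ¬ LeStar (f j) (f i))
include hwo

lemma bset_diff_finite {α β : ι} (h : α ≤ β) : (Bset f α \ Bset f β).Finite := by
  rcases eq_or_lt_of_le h with rfl | h
  · simp
  · exact bset_diff_finite_of_leStar (hwo _ _ h).1

lemma bsetO_diff_finite {a a' : Option ι}
    (ha : ∀ α', a' = some α' → ∃ α, a = some α ∧ α' ≤ α) :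
    (BsetO f a' \ BsetO f a).Finite := by
  match a' with
  | none => simp [BsetO]
  | some α' =>
      obtain ⟨α, rfl, hle⟩ := ha α' rfl
      exact bset_diff_finite hwo hle


/-- Every neighborhood of `Sum.inr β` contains a basic neighborhood. -/
lemma exists_core_subset_of_mem_nhds {β : ι} {W : Set ((ℕ × ℕ) ⊕ ι)}
    (hW : letI := bvdTop ι f; W ∈ 𝓝 (Sum.inr β)) :
    ∃ (a : Option ι) (F : Set (ℕ × ℕ)), F.Finite ∧ ltO a β ∧ core f a β F ⊆ W := by
  letI := bvdTop ι f
  obtain ⟨O, hOW, hO, hβO⟩ := mem_nhds_iff.mp hW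
  suffices h : ∃ (a : Option ι) (F : Set (ℕ × ℕ)), F.Finite ∧ ltO a β ∧ core f a β F ⊆ O by
    obtain ⟨a, F, h1, h2, h3⟩ := h
    exact ⟨a, F, h1, h2, h3.trans hOW⟩
  clear hOW hW
  change TopologicalSpace.GenerateOpen _ O at hO
  induction hO with
  | basic U hU =>
      rcases hU with ⟨p, rfl⟩ | ⟨β', a', F', hF', ha', rfl⟩
      · simp at hβO
      · have hmem : Sum.inr β ∈ core f a' β' F' := hβO
        obtain ⟨h1, h2⟩ := inr_mem_core_iff.1 hmem
        refine ⟨a', F' ∪ (Bset f β \ Bset f β') ∪ (BsetO f a' \ BsetO f a'), ?_, h1, ?_⟩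
        · exact ((hF'.union (bset_diff_finite hwo h2)).union (by simp))
        · exact core_subset_core (fun α' h => ⟨α', h, le_rfl⟩) h2
  | univ =>
      exact ⟨none, ∅, finite_empty, fun α h => (nomatch h), subset_univ _⟩
  | inter O₁ O₂ _ _ IH₁ IH₂ =>
      obtain ⟨a₁, F₁, hF₁, ha₁, hs₁⟩ := IH₁ hβO.1
      obtain ⟨a₂, F₂, hF₂, ha₂, hs₂⟩ := IH₂ hβO.2
      obtain ⟨a, hm₁, hm₂, hlt⟩ := merge_cases a₁ a₂
      have hma : ∀ (b : Option ι), (b = a₁ ∨ b = a₂) → ∀ α', b = some α' →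
          ∃ α, a = some α ∧ α' ≤ α := by
        rintro b (rfl | rfl) α' h
        exacts [hm₁ α' h, hm₂ α' h]
      have hla : ltO a β := hlt β ha₁ ha₂
      refine ⟨a, (F₁ ∪ (Bset f β \ Bset f β) ∪ (BsetO f a₁ \ BsetO f a)) ∪
        (F₂ ∪ (Bset f β \ Bset f β) ∪ (BsetO f a₂ \ BsetO f a)), ?_, hla, ?_⟩
      · refine Finite.union (Finite.union (Finite.union hF₁ (by simp)) ?_)
          (Finite.union (Finite.union hF₂ (by simp)) ?_)
        · exact bsetO_diff_finite hwo (hma a₁ (Or.inl rfl))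
        · exact bsetO_diff_finite hwo (hma a₂ (Or.inr rfl))
      · intro x hx
        refine ⟨hs₁ (core_subset_core (hma a₁ (Or.inl rfl)) le_rfl
            (core_ne_F subset_union_left hx)), hs₂ (core_subset_core (hma a₂ (Or.inr rfl)) le_rfl
            (core_ne_F subset_union_right hx))⟩
  | sUnion S hS IH =>
      obtain ⟨s, hsS, hβs⟩ := hβO
      obtain ⟨a, F, h1, h2, h3⟩ := IH s hsS hβs
      exact ⟨a, F, h1, h2, h3.trans (subset_sUnion_of_mem hsS)⟩

omit hwo in
lemma subcover_helper {X : Type} [TopologicalSpace X] {K C D : Set X} {κ : Type}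
    {U : κ → Set X} (hU : ∀ i, IsOpen (U i)) (hKcov : K ⊆ ⋃ i, U i) (i₀ : κ)
    (hC : IsCompact C) (hD : D.Finite)
    (hCK : C ⊆ K) (hDK : D ⊆ K) (hsub : K ⊆ U i₀ ∪ C ∪ D) :
    ∃ t : Finset κ, K ⊆ ⋃ i ∈ t, U i := by
  classical
  obtain ⟨t₁, ht₁⟩ := hC.elim_finite_subcover U hU (hCK.trans hKcov)
  obtain ⟨t₂, ht₂⟩ := hD.isCompact.elim_finite_subcover U hU (hDK.trans hKcov)
  refine ⟨insert i₀ (t₁ ∪ t₂), fun x hx => ?_⟩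
  rcases hsub hx with (h | h) | h
  · exact mem_biUnion (Finset.mem_insert_self _ _) h
  · obtain ⟨i, hi, hxi⟩ := mem_iUnion₂.1 (ht₁ h)
    exact mem_biUnion (Finset.mem_insert_of_mem (Finset.mem_union_left _ hi)) hxi
  · obtain ⟨i, hi, hxi⟩ := mem_iUnion₂.1 (ht₂ h)
    exact mem_biUnion (Finset.mem_insert_of_mem (Finset.mem_union_right _ hi)) hxi

/-- compactness of the sets `E (B_α ∪ G) α`. -/
lemma isCompact_E [WellFoundedLT ι] (α : ι) :
    ∀ S : Set (ℕ × ℕ), (S \ Bset f α).Finite →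
      (letI := bvdTop ι f; IsCompact (E S α)) := by
  letI := bvdTop ι f
  induction α using WellFoundedLT.induction with
  | _ α IH =>
  intro S hS
  refine isCompact_of_finite_subcover fun {κ} U hU hcov => ?_
  have hα : Sum.inr α ∈ E S α := inr_mem_E le_rfl
  obtain ⟨i₀, hi₀⟩ := mem_iUnion.1 (hcov hα)
  obtain ⟨a, F', hF', ha, hcore⟩ := exists_core_subset_of_mem_nhds hwo
    ((hU i₀).mem_nhds hi₀)
  rcases a with _ | α'
  · -- no lower bound: everything except finitely many isolated points is in `U i₀`
    refine subcover_helper hU hcov i₀ isCompact_empty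
      ((hS.union (hF'.inter_of_right S)).image Sum.inl) ?_ ?_ ?_
    · exact empty_subset _
    · rintro x ⟨p, hp, rfl⟩
      exact Or.inr ⟨p, by rcases hp with h | h; exacts [h.1, h.1], rfl⟩
    · rintro x hx
      rcases hx with ⟨γ, hγ, rfl⟩ | ⟨p, hp, rfl⟩
      · exact Or.inl (Or.inl (hcore (inr_mem_core_iff.2 ⟨fun γ' h => (nomatch h), hγ⟩)))
      · by_cases h1 : p ∈ Bset f α
        · by_cases h2 : p ∈ F'
          · exact Or.inr ⟨p, Or.inr ⟨hp, h2⟩, rfl⟩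
          · refine Or.inl (Or.inl (hcore (inl_mem_core_iff.2 ⟨h1, notMem_empty p, h2⟩)))
        · exact Or.inr ⟨p, Or.inl ⟨hp, h1⟩, rfl⟩
  · -- lower bound `α' < α`: use the inductive hypothesis
    have hα' : α' < α := ha α' rfl
    set S' : Set (ℕ × ℕ) := (S ∩ Bset f α') ∪ (S \ Bset f α) ∪ (S ∩ F') with hS'def
    have hS'fin : (S' \ Bset f α').Finite := by
      refine Finite.subset (hS.union (hF'.inter_of_right S)) ?_
      rintro p ⟨(hp | hp) | hp, hnp⟩
      · exact absurd hp.2 hnp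
      · exact Or.inl hp
      · exact Or.inr hp
    have hC := IH α' hα' S' hS'fin
    refine subcover_helper hU hcov i₀ hC finite_empty ?_ (empty_subset _) ?_
    · rintro x (⟨γ, hγ, rfl⟩ | ⟨p, hp, rfl⟩)
      · exact Or.inl ⟨γ, hγ.trans hα'.le, rfl⟩
      · exact Or.inr ⟨p, by
          rcases hp with (h | h) | h
          exacts [h.1, h.1, h.1], rfl⟩
    · rintro x hx
      rcases hx with ⟨γ, hγ, rfl⟩ | ⟨p, hp, rfl⟩
      · by_cases h : γ ≤ α'
        · exact Or.inl (Or.inr (inr_mem_E h))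
        · exact Or.inl (Or.inl (hcore (inr_mem_core_iff.2
            ⟨fun x hx => by injection hx with hx; exact hx ▸ lt_of_not_ge h, hγ⟩)))
      · by_cases h1 : p ∈ Bset f α
        · by_cases h2 : p ∈ Bset f α'
          · exact Or.inl (Or.inr (Or.inr ⟨p, Or.inl (Or.inl ⟨hp, h2⟩), rfl⟩))
          · by_cases h3 : p ∈ F'
            · exact Or.inl (Or.inr (Or.inr ⟨p, Or.inr ⟨hp, h3⟩, rfl⟩))
            · refine Or.inl (Or.inl (hcore (inl_mem_core_iff.2 ⟨h1, ?_, h3⟩)))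
              exact h2
        · exact Or.inl (Or.inr (Or.inr ⟨p, Or.inl (Or.inr ⟨hp, h1⟩), rfl⟩))

lemma isClosed_E {α : ι} {S : Set (ℕ × ℕ)} (hS : (S \ Bset f α).Finite) :
    letI := bvdTop ι f; IsClosed (E S α) := by
  letI := bvdTop ι f
  rw [← isOpen_compl_iff, isOpen_iff_mem_nhds]
  rintro (p | δ) hx
  · have hp : p ∉ S := fun h => hx (Or.inr ⟨p, h, rfl⟩)
    refine mem_of_superset ((isOpen_singleton_inl p).mem_nhds rfl) ?_
    rintro y hy
    obtain rfl : y = Sum.inl p := hy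
    rintro (⟨γ, -, hγ⟩ | ⟨q, hq, hq2⟩)
    · exact (nomatch hγ)
    · exact hp (Sum.inl_injective hq2 ▸ hq)
  · have hδ : ¬ δ ≤ α := fun h => hx (Or.inl ⟨δ, h, rfl⟩)
    have hlt : α < δ := lt_of_not_ge hδ
    have hopen : letI := bvdTop ι f; IsOpen (core f (some α) δ (S \ Bset f α)) :=
      isOpen_core hS (fun x h => by injection h with h; exact h ▸ hlt)
    have hmem : Sum.inr δ ∈ core f (some α) δ (S \ Bset f α) :=
      inr_mem_core_iff.2 ⟨fun x h => by injection h with h; exact h ▸ hlt, le_rfl⟩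
    refine mem_of_superset (hopen.mem_nhds hmem) ?_
    rintro (q | γ) hy
    · obtain ⟨h1, h2, h3⟩ := inl_mem_core_iff.1 hy
      rintro (⟨γ', -, hγ⟩ | ⟨q', hq, hq2⟩)
      · exact (nomatch hγ)
      · cases Sum.inl_injective hq2.symm
        exact h3 ⟨hq, h2⟩
    · obtain ⟨hlt2, -⟩ := inr_mem_core_iff.1 hy
      rintro (⟨γ', hγ', hγ⟩ | ⟨q', -, hq2⟩)
      · exact absurd (hlt2 α rfl) (not_lt.2 ((Sum.inr_injective hγ).le.trans hγ'))
      · exact (nomatch hq2)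

lemma compact_subset_E [Nonempty ι] {K : Set ((ℕ × ℕ) ⊕ ι)}
    (hK : letI := bvdTop ι f; IsCompact K) :
    ∃ (α : ι) (G : Set (ℕ × ℕ)), G.Finite ∧ K ⊆ E (Bset f α ∪ G) α := by
  letI := bvdTop ι f
  classical
  set V : ((ℕ × ℕ) ⊕ ι) → Set ((ℕ × ℕ) ⊕ ι) := fun x =>
    match x with
    | Sum.inl p => {Sum.inl p}
    | Sum.inr γ => core f none γ ∅ with hV
  have hVopen : ∀ x, IsOpen (V x) := by
    rintro (p | γ)
    · exact isOpen_singleton_inl p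
    · exact isOpen_core finite_empty (fun x h => (nomatch h))
  have hVmem : ∀ x, x ∈ V x := by
    rintro (p | γ)
    · exact rfl
    · exact inr_mem_core_iff.2 ⟨fun x h => (nomatch h), le_rfl⟩
  obtain ⟨t, ht⟩ := hK.elim_finite_subcover V hVopen (fun x _ => mem_iUnion.2 ⟨x, hVmem x⟩)
  set J : Finset ι := t.biUnion (fun x => match x with
    | Sum.inl _ => (∅ : Finset ι)
    | Sum.inr γ => {γ}) with hJ
  set α : ι := if h : J.Nonempty then J.max' h else Classical.arbitrary ι with hα
  have hJle : ∀ γ ∈ J, γ ≤ α := by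
    intro γ hγ
    rw [hα, dif_pos ⟨γ, hγ⟩]
    exact J.le_max' γ hγ
  refine ⟨α, {p | Sum.inl p ∈ t} ∪ ⋃ γ ∈ (J : Set ι), (Bset f γ \ Bset f α), ?_, fun x hx => ?_⟩
  · refine Finite.union ?_ ?_
    · exact Set.Finite.preimage (Sum.inl_injective.injOn) t.finite_toSet
    · exact J.finite_toSet.biUnion fun γ hγ => bset_diff_finite hwo (hJle γ (Finset.mem_coe.1 hγ))
  · obtain ⟨y, hyt, hxy⟩ := mem_iUnion₂.1 (ht hx)
    match y with
    | Sum.inl p =>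
        obtain rfl : x = Sum.inl p := hxy
        exact Or.inr ⟨p, Or.inr (Or.inl hyt), rfl⟩
    | Sum.inr γ =>
        have hγJ : γ ∈ J := by
          rw [hJ]
          exact Finset.mem_biUnion.2 ⟨Sum.inr γ, hyt, by simp⟩
        match x with
        | Sum.inr γ' =>
            obtain ⟨-, hle⟩ := inr_mem_core_iff.1 hxy
            exact Or.inl ⟨γ', hle.trans (hJle γ hγJ), rfl⟩
        | Sum.inl p =>
            obtain ⟨h1, -, -⟩ := inl_mem_core_iff.1 hxy
            by_cases hpB : p ∈ Bset f α
            · exact Or.inr ⟨p, Or.inl hpB, rfl⟩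
            · exact Or.inr ⟨p, Or.inr (Or.inr
                (mem_biUnion (Finset.mem_coe.2 hγJ) ⟨h1, hpB⟩)), rfl⟩


omit hwo in
lemma pc_inl (p : ℕ × ℕ) :
    letI := bvdTop ι f
    pointCharacter ((Sum.inl p : (ℕ × ℕ) ⊕ ι) : OnePoint ((ℕ × ℕ) ⊕ ι)) ≤ bNumber := by
  letI := bvdTop ι f
  have hsing : IsOpen ({((Sum.inl p : (ℕ × ℕ) ⊕ ι) : OnePoint ((ℕ × ℕ) ⊕ ι))} :
      Set (OnePoint ((ℕ × ℕ) ⊕ ι))) := by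
    rw [← Set.image_singleton]
    exact OnePoint.isOpen_image_coe.2 (isOpen_singleton_inl p)
  refine le_trans (pointCharacter_le (ℬ := {{((Sum.inl p : (ℕ × ℕ) ⊕ ι) : OnePoint _)}})
    ?_ ?_) ?_
  · rintro U rfl
    exact ⟨rfl, hsing⟩
  · intro V hV
    exact ⟨_, rfl, singleton_subset_iff.2 (mem_of_mem_nhds hV)⟩
  · rw [Cardinal.mk_singleton]
    exact le_trans Cardinal.one_lt_aleph0.le aleph0_le_bNumber

lemma pc_inr (hcard : Cardinal.mk ι = bNumber) (β : ι) :
    letI := bvdTop ι f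
    pointCharacter ((Sum.inr β : (ℕ × ℕ) ⊕ ι) : OnePoint ((ℕ × ℕ) ⊕ ι)) ≤ bNumber := by
  classical
  letI := bvdTop ι f
  set Uof : Option ι × Finset (ℕ × ℕ) → Set (OnePoint ((ℕ × ℕ) ⊕ ι)) := fun q =>
    if h : ltO q.1 β then (↑) '' core f q.1 β ↑q.2 else (↑) '' core f none β ↑q.2 with hUof
  have hprop : ∀ q, ((Sum.inr β : (ℕ × ℕ) ⊕ ι) : OnePoint _) ∈ Uof q ∧ IsOpen (Uof q) := by
    intro q
    rw [hUof]
    dsimp only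
    by_cases h : ltO q.1 β
    · rw [dif_pos h]
      exact ⟨⟨_, inr_mem_core_iff.2 ⟨h, le_rfl⟩, rfl⟩,
        OnePoint.isOpen_image_coe.2 (isOpen_core q.2.finite_toSet h)⟩
    · rw [dif_neg h]
      exact ⟨⟨_, inr_mem_core_iff.2 ⟨fun α hα => (nomatch hα), le_rfl⟩, rfl⟩,
        OnePoint.isOpen_image_coe.2
          (isOpen_core q.2.finite_toSet (fun α hα => (nomatch hα)))⟩
  refine le_trans (pointCharacter_le (ℬ := Set.range Uof) (fun U hU => ?_) (fun V hV => ?_))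
    (le_trans Cardinal.mk_range_le (mk_option_prod_finset_le hcard))
  · obtain ⟨q, rfl⟩ := hU
    exact hprop q
  · rw [OnePoint.nhds_coe_eq, mem_map] at hV
    obtain ⟨a, F, hF, ha, hsub⟩ := exists_core_subset_of_mem_nhds hwo hV
    refine ⟨Uof (a, hF.toFinset), mem_range_self _, ?_⟩
    rw [hUof]
    dsimp only
    rw [dif_pos ha, hF.coe_toFinset]
    exact image_subset_iff.2 (fun x hx => hsub hx)

lemma pc_infty [WellFoundedLT ι] (hcard : Cardinal.mk ι = bNumber)
    (hunb : ∀ g : ℕ → ℕ, ∃ i : ι, ¬ LeStar (f i) g) :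
    letI := bvdTop ι f
    pointCharacter (OnePoint.infty : OnePoint ((ℕ × ℕ) ⊕ ι)) = bNumber := by
  letI := bvdTop ι f
  have hnei : Nonempty ι := Cardinal.mk_ne_zero_iff.1 (by rw [hcard]; exact bNumber_pos)
  classical
  refine le_antisymm ?_ ?_
  · set Uof : ι × Finset (ℕ × ℕ) → Set (OnePoint ((ℕ × ℕ) ⊕ ι)) := fun q =>
      ((↑) '' (E (Bset f q.1 ∪ ↑q.2) q.1))ᶜ with hUof
    have hEfin : ∀ (α : ι) (G : Finset (ℕ × ℕ)), ((Bset f α ∪ ↑G) \ Bset f α).Finite := by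
      intro α G
      refine G.finite_toSet.subset (fun p hp => ?_)
      rcases hp with ⟨(h | h), h2⟩
      · exact absurd h h2
      · exact h
    refine le_trans (pointCharacter_le (ℬ := Set.range Uof) (fun U hU => ?_) (fun V hV => ?_))
      (le_trans Cardinal.mk_range_le (mk_prod_finset_le hcard))
    · obtain ⟨q, rfl⟩ := hU
      refine ⟨fun hmem => OnePoint.infty_notMem_image_coe hmem, ?_⟩
      exact (OnePoint.isOpen_compl_image_coe).2
        ⟨isClosed_E hwo (hEfin q.1 q.2), isCompact_E hwo q.1 _ (hEfin q.1 q.2)⟩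
    · obtain ⟨s, ⟨hscl, hscp⟩, hsV⟩ := (OnePoint.hasBasis_nhds_infty).mem_iff.1 hV
      obtain ⟨α, G, hGfin, hsE⟩ := compact_subset_E hwo hscp
      refine ⟨Uof (α, hGfin.toFinset), mem_range_self _, ?_⟩
      rw [hUof]
      dsimp only
      rw [hGfin.coe_toFinset]
      refine subset_trans (fun x hx => ?_) hsV
      match x with
      | OnePoint.infty => exact Or.inr rfl
      | OnePoint.some y => exact Or.inl ⟨y, fun hys => hx ⟨y, hsE hys, rfl⟩, rfl⟩
  · obtain ⟨ℬ, hmk, h1, h2⟩ := exists_pointCharacter_base (OnePoint.infty : OnePoint ((ℕ × ℕ) ⊕ ι))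
    rw [← hmk]
    by_contra hlt
    push_neg at hlt
    have hKU : ∀ U : ℬ, ∃ (α : ι) (G : Set (ℕ × ℕ)), G.Finite ∧
        ((((↑) : ((ℕ × ℕ) ⊕ ι) → OnePoint ((ℕ × ℕ) ⊕ ι)) ⁻¹' U.1)ᶜ ⊆
          E (Bset f α ∪ G) α) := by
      intro U
      have hU := h1 U.1 U.2
      have hcp : IsCompact (((↑) : ((ℕ × ℕ) ⊕ ι) → OnePoint ((ℕ × ℕ) ⊕ ι)) ⁻¹' U.1)ᶜ :=
        ((OnePoint.isOpen_iff_of_mem' hU.1).1 hU.2).1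
      exact compact_subset_E hwo hcp
    choose αU GU hGU hsubU using hKU
    obtain ⟨g, hg⟩ := bounded_of_mk_lt (G := Set.range (fun U => f (αU U)))
      (lt_of_le_of_lt Cardinal.mk_range_le hlt)
    obtain ⟨i, hi⟩ := hunb g
    have hDcl : letI := bvdTop ι f; IsClosed (E (Bset f i) i) := isClosed_E hwo (by simp)
    have hDcp : letI := bvdTop ι f; IsCompact (E (Bset f i) i) := isCompact_E hwo i _ (by simp)
    have hVmem : ((↑) '' (E (Bset f i) i))ᶜ ∈ 𝓝 (OnePoint.infty : OnePoint ((ℕ × ℕ) ⊕ ι)) :=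
      ((OnePoint.isOpen_compl_image_coe).2 ⟨hDcl, hDcp⟩).mem_nhds
        (fun h => OnePoint.infty_notMem_image_coe h)
    obtain ⟨U, hUℬ, hUV⟩ := h2 _ hVmem
    set U' : ℬ := ⟨U, hUℬ⟩ with hU'
    have hBsub : Bset f i ⊆ Bset f (αU U') ∪ GU U' := by
      intro p hp
      have h3 : Sum.inl p ∈ (((↑) : ((ℕ × ℕ) ⊕ ι) → OnePoint ((ℕ × ℕ) ⊕ ι)) ⁻¹' U'.1)ᶜ := by
        intro hmem
        exact (hUV hmem) ⟨Sum.inl p, Or.inr ⟨p, hp, rfl⟩, rfl⟩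
      rcases hsubU U' h3 with ⟨γ, -, hγ⟩ | ⟨q, hq, hq2⟩
      · exact (nomatch hγ)
      · exact (Sum.inl_injective hq2) ▸ hq
    have hles : LeStar (f i) (f (αU U')) := by
      have hsub3 : {n | f (αU U') n < f i n} ⊆ (fun n => (n, f i n)) ⁻¹' (GU U') := by
        intro n hn
        have hpmem : (n, f i n) ∈ Bset f i := by simp [Bset]
        rcases hBsub hpmem with h | h
        · exact absurd (show f i n ≤ f (αU U') n from h) (not_le.2 hn)
        · exact h
      refine Finite.subset ((hGU U').preimage ?_) hsub3
      exact Function.Injective.injOn (fun a b h => congrArg Prod.fst h)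
    refine hi ?_
    have hsub2 : {n | g n < f i n} ⊆ {n | g n < f (αU U') n} ∪ {n | f (αU U') n < f i n} := by
      intro n hn
      by_cases hc : f i n ≤ f (αU U') n
      · exact Or.inl (lt_of_lt_of_le hn hc)
      · exact Or.inr (lt_of_not_ge hc)
    exact Finite.subset ((hg _ (mem_range_self U')).union hles) hsub2

lemma spaceCharacter_eq [WellFoundedLT ι] (hcard : Cardinal.mk ι = bNumber)
    (hunb : ∀ g : ℕ → ℕ, ∃ i : ι, ¬ LeStar (f i) g) :
    letI := bvdTop ι f
    spaceCharacter (OnePoint ((ℕ × ℕ) ⊕ ι)) = bNumber := by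
  letI := bvdTop ι f
  refine le_antisymm (ciSup_le' ?_) ?_
  · intro x
    match x with
    | OnePoint.infty => exact (pc_infty hwo hcard hunb).le
    | OnePoint.some (Sum.inl p) => exact pc_inl p
    | OnePoint.some (Sum.inr β) => exact pc_inr hwo hcard β
  · rw [← pc_infty hwo hcard hunb]
    exact pointCharacter_le_spaceCharacter _

omit hwo in
lemma fiber_finite_of_finite {v : ℕ → ℕ × ℕ} (hfib : ∀ p, {k | v k = p}.Finite)
    {F : Set (ℕ × ℕ)} (hF : F.Finite) : {k | v k ∈ F}.Finite := by
  have : {k | v k ∈ F} ⊆ ⋃ p ∈ F, {k | v k = p} := by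
    intro k hk
    exact mem_biUnion hk rfl
  exact Finite.subset (hF.biUnion (fun p _ => hfib p)) this

/-- A sequence of isolated points lying in `B_δ` but eventually avoiding every smaller
`B_α` converges to the point `B_δ` (in `X`). -/
lemma tendsto_inr' {v : ℕ → ℕ × ℕ} {δ : ι}
    (hδ : ∀ k, v k ∈ Bset f δ)
    (hα : ∀ α, α < δ → {k | v k ∈ Bset f α}.Finite)
    (hfib : ∀ p, {k | v k = p}.Finite) :
    letI := bvdTop ι f
    Filter.Tendsto (fun k => (Sum.inl (v k) : (ℕ × ℕ) ⊕ ι))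
      Filter.atTop (𝓝 (Sum.inr δ : (ℕ × ℕ) ⊕ ι)) := by
  letI := bvdTop ι f
  rw [Filter.tendsto_def]
  intro W hW
  obtain ⟨a, F, hF, ha, hsub⟩ := exists_core_subset_of_mem_nhds hwo hW
  rw [← Nat.cofinite_eq_atTop, Filter.mem_cofinite]
  have hBa : {k | v k ∈ BsetO f a}.Finite := by
    match a with
    | none => simp [BsetO]
    | some α => exact hα α (ha α rfl)
  refine Finite.subset (hBa.union (fiber_finite_of_finite hfib hF)) ?_
  intro k hk
  by_contra hk2
  simp only [Set.mem_union, Set.mem_setOf_eq, not_or] at hk2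
  exact hk (hsub (inl_mem_core_iff.2 ⟨hδ k, hk2.1, hk2.2⟩))

/-- A sequence of isolated points lying in `B_δ` but eventually avoiding every smaller
`B_α` converges to the point `B_δ`. -/
lemma tendsto_inr {v : ℕ → ℕ × ℕ} {δ : ι}
    (hδ : ∀ k, v k ∈ Bset f δ)
    (hα : ∀ α, α < δ → {k | v k ∈ Bset f α}.Finite)
    (hfib : ∀ p, {k | v k = p}.Finite) :
    letI := bvdTop ι f
    Filter.Tendsto (fun k => ((Sum.inl (v k) : (ℕ × ℕ) ⊕ ι) : OnePoint ((ℕ × ℕ) ⊕ ι)))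
      Filter.atTop (𝓝 ((Sum.inr δ : (ℕ × ℕ) ⊕ ι) : OnePoint ((ℕ × ℕ) ⊕ ι))) := by
  letI := bvdTop ι f
  rw [OnePoint.nhds_coe_eq]
  exact Filter.Tendsto.comp Filter.tendsto_map (tendsto_inr' hwo hδ hα hfib)

/-- A sequence escaping all the sets `E` converges to `∞`. -/
lemma tendsto_infty [WellFoundedLT ι] [Nonempty ι] {w : ℕ → (ℕ × ℕ) ⊕ ι}
    (h : ∀ (α : ι) (G : Set (ℕ × ℕ)), G.Finite → {k | w k ∈ E (Bset f α ∪ G) α}.Finite) :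
    letI := bvdTop ι f
    Filter.Tendsto (fun k => ((w k : (ℕ × ℕ) ⊕ ι) : OnePoint ((ℕ × ℕ) ⊕ ι)))
      Filter.atTop (𝓝 (OnePoint.infty : OnePoint ((ℕ × ℕ) ⊕ ι))) := by
  letI := bvdTop ι f
  rw [(OnePoint.hasBasis_nhds_infty).tendsto_right_iff]
  rintro s ⟨hscl, hscp⟩
  obtain ⟨α, G, hGfin, hsE⟩ := compact_subset_E hwo hscp
  have hfin : {k | w k ∈ s}.Finite := Finite.subset (h α G hGfin) (fun k hk => hsE hk)
  have hmem : {k | w k ∈ s}ᶜ ∈ (Filter.atTop : Filter ℕ) :=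
    Nat.cofinite_eq_atTop ▸ hfin.compl_mem_cofinite
  obtain ⟨N, hN⟩ := Filter.mem_atTop_sets.1 hmem
  rw [Filter.eventually_atTop]
  exact ⟨N, fun k hk => Or.inl ⟨w k, hN k hk, rfl⟩⟩

omit hwo in
/-- strictly monotone subsequence extraction in `ι`. -/
lemma exists_strictMono_subseq [WellFoundedLT ι] {v : ℕ → ι}
    (hfib : ∀ c, {k | v k = c}.Finite) :
    ∃ φ : ℕ → ℕ, StrictMono φ ∧ StrictMono (v ∘ φ) := by
  have hPWO : (Set.univ : Set ι).IsPWO :=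
    ((Set.isWF_univ_iff (α := ι)).2 inferInstance).isPWO
  obtain ⟨g, hg⟩ := hPWO.exists_monotone_subseq (f := v) (fun n => mem_univ _)
  set m : ℕ → ι := fun n => v (g n) with hm
  have hmono : Monotone m := fun i j hij => hg hij
  have key : ∀ j : ℕ, ∃ n, j < n ∧ m j < m n := by
    intro j
    have hfin : {n | m n = m j}.Finite :=
      Set.Finite.preimage (Function.Injective.injOn g.injective) (hfib (m j))
    obtain ⟨n, hn⟩ := (hfin.union (finite_Iic j)).infinite_compl.nonempty
    simp only [mem_compl_iff, mem_union, not_or, mem_setOf_eq, mem_Iic, not_le] at hn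
    exact ⟨n, hn.2, lt_of_le_of_ne (hmono hn.2.le) (Ne.symm hn.1)⟩
  set ψ : ℕ → ℕ := fun k => Nat.rec 0 (fun _ prev => (key prev).choose) k with hψ
  have hψs : ∀ k, ψ k < ψ (k + 1) ∧ m (ψ k) < m (ψ (k + 1)) := by
    intro k
    have : ψ (k + 1) = (key (ψ k)).choose := rfl
    rw [this]
    exact (key (ψ k)).choose_spec
  refine ⟨g ∘ ψ, ?_, ?_⟩
  · exact g.strictMono.comp (strictMono_nat_of_lt_succ (fun k => (hψs k).1))
  · exact strictMono_nat_of_lt_succ (fun k => (hψs k).2)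

lemma seqCompactSpace [WellFoundedLT ι] [Nonempty ι] :
    letI := bvdTop ι f
    SeqCompactSpace (OnePoint ((ℕ × ℕ) ⊕ ι)) := by
  letI := bvdTop ι f
  constructor
  intro u _
  by_cases hconst : ∃ x, {k | u k = x}.Infinite
  · obtain ⟨x, hx⟩ := hconst
    refine ⟨x, mem_univ _, Nat.nth (fun k => u k = x), Nat.nth_strictMono hx, ?_⟩
    have heq : (u ∘ Nat.nth (fun k => u k = x)) = fun _ => x :=
      funext fun k => Nat.nth_mem_of_infinite hx k
    rw [heq]
    exact tendsto_const_nhds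
  push_neg at hconst
  have hnotfin : ¬ ({k | ∃ p : ℕ × ℕ, u k = OnePoint.some (Sum.inl p)}.Finite ∧
      {k | ∃ γ : ι, u k = OnePoint.some (Sum.inr γ)}.Finite) := by
    rintro ⟨h1, h2⟩
    have huniv : (Set.univ : Set ℕ).Finite := by
      refine Finite.subset ((h1.union h2).union (hconst OnePoint.infty)) ?_
      intro k _
      match hk : u k with
      | OnePoint.infty => exact Or.inr hk
      | OnePoint.some (Sum.inl p) => exact Or.inl (Or.inl ⟨p, hk⟩)
      | OnePoint.some (Sum.inr γ) => exact Or.inl (Or.inr ⟨γ, hk⟩)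
    exact Set.infinite_univ huniv
  by_cases hinl : {k | ∃ p : ℕ × ℕ, u k = OnePoint.some (Sum.inl p)}.Infinite
  · -- infinitely many isolated points
    set φ₀ := Nat.nth (fun k => ∃ p : ℕ × ℕ, u k = OnePoint.some (Sum.inl p)) with hφ₀
    have hφ₀s : StrictMono φ₀ := Nat.nth_strictMono hinl
    have hP : ∀ k, ∃ p, u (φ₀ k) = OnePoint.some (Sum.inl p) := fun k =>
      Nat.nth_mem_of_infinite hinl k
    choose v hv using hP
    have hvfib : ∀ p, {k | v k = p}.Finite := by
      intro p
      refine Finite.subset (Set.Finite.preimage (Function.Injective.injOn hφ₀s.injective)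
        (hconst (OnePoint.some (Sum.inl p)))) ?_
      intro k hk
      have : u (φ₀ k) = OnePoint.some (Sum.inl p) := by
        rw [hv k, show v k = p from hk]
      exact this
    by_cases hB : ∃ δ : ι, {k | v k ∈ Bset f δ}.Infinite
    · set δ := WellFounded.min (IsWellFounded.wf (r := ((· < ·) : ι → ι → Prop)))
        {δ : ι | {k | v k ∈ Bset f δ}.Infinite} hB with hδdef
      have hδinf : {k | v k ∈ Bset f δ}.Infinite := WellFounded.min_mem _ _ hB
      have hδmin : ∀ α, α < δ → {k | v k ∈ Bset f α}.Finite := by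
        intro α hα
        rw [← Set.not_infinite]
        exact fun h => WellFounded.not_lt_min
          (IsWellFounded.wf (r := ((· < ·) : ι → ι → Prop))) _ h hα
      set φ₁ := Nat.nth (fun k => v k ∈ Bset f δ) with hφ₁
      have hφ₁s : StrictMono φ₁ := Nat.nth_strictMono hδinf
      have h1 : ∀ k, v (φ₁ k) ∈ Bset f δ := fun k => Nat.nth_mem_of_infinite hδinf k
      have h2 : ∀ α, α < δ → {k | v (φ₁ k) ∈ Bset f α}.Finite := by
        intro α hα
        have hrw : {k | v (φ₁ k) ∈ Bset f α} = φ₁ ⁻¹' {j | v j ∈ Bset f α} := rfl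
        rw [hrw]
        exact Set.Finite.preimage (Function.Injective.injOn hφ₁s.injective) (hδmin α hα)
      have h3 : ∀ p, {k | v (φ₁ k) = p}.Finite := by
        intro p
        have hrw : {k | v (φ₁ k) = p} = φ₁ ⁻¹' {j | v j = p} := rfl
        rw [hrw]
        exact Set.Finite.preimage (Function.Injective.injOn hφ₁s.injective) (hvfib p)
      refine ⟨((Sum.inr δ : (ℕ × ℕ) ⊕ ι) : OnePoint ((ℕ × ℕ) ⊕ ι)), mem_univ _,
        φ₀ ∘ φ₁, hφ₀s.comp hφ₁s, ?_⟩
      have heq : u ∘ (φ₀ ∘ φ₁) =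
          fun k => ((Sum.inl (v (φ₁ k)) : (ℕ × ℕ) ⊕ ι) : OnePoint ((ℕ × ℕ) ⊕ ι)) :=
        funext fun k => hv (φ₁ k)
      rw [heq]
      exact tendsto_inr hwo h1 h2 h3
    · push_neg at hB
      refine ⟨OnePoint.infty, mem_univ _, φ₀, hφ₀s, ?_⟩
      have heq : u ∘ φ₀ =
          fun k => ((Sum.inl (v k) : (ℕ × ℕ) ⊕ ι) : OnePoint ((ℕ × ℕ) ⊕ ι)) :=
        funext fun k => hv k
      rw [heq]
      refine tendsto_infty hwo ?_
      intro α G hG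
      refine Finite.subset ((hB α).union (fiber_finite_of_finite hvfib hG)) ?_
      intro k hk
      rcases hk with ⟨γ, -, hγ⟩ | ⟨p, hp, hp2⟩
      · exact (nomatch hγ)
      · cases Sum.inl_injective hp2
        rcases hp with h | h
        · exact Or.inl h
        · exact Or.inr h
  · -- infinitely many non-isolated points
    have hinr : {k | ∃ γ : ι, u k = OnePoint.some (Sum.inr γ)}.Infinite := by
      rw [Set.not_infinite] at hinl
      intro hfin
      exact hnotfin ⟨hinl, hfin⟩
    set φ₀ := Nat.nth (fun k => ∃ γ : ι, u k = OnePoint.some (Sum.inr γ)) with hφ₀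
    have hφ₀s : StrictMono φ₀ := Nat.nth_strictMono hinr
    have hP : ∀ k, ∃ γ, u (φ₀ k) = OnePoint.some (Sum.inr γ) := fun k =>
      Nat.nth_mem_of_infinite hinr k
    choose v hv using hP
    have hvfib : ∀ c, {k | v k = c}.Finite := by
      intro c
      refine Finite.subset (Set.Finite.preimage (Function.Injective.injOn hφ₀s.injective)
        (hconst (OnePoint.some (Sum.inr c)))) ?_
      intro k hk
      have : u (φ₀ k) = OnePoint.some (Sum.inr c) := by
        rw [hv k, show v k = c from hk]
      exact this
    obtain ⟨φ₁, hφ₁s, hβs⟩ := exists_strictMono_subseq hvfib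
    have heq : u ∘ (φ₀ ∘ φ₁) =
        fun k => ((Sum.inr (v (φ₁ k)) : (ℕ × ℕ) ⊕ ι) : OnePoint ((ℕ × ℕ) ⊕ ι)) :=
      funext fun k => hv (φ₁ k)
    by_cases hub : ∃ γ : ι, ∀ k, v (φ₁ k) ≤ γ
    · set δ := WellFounded.min (IsWellFounded.wf (r := ((· < ·) : ι → ι → Prop)))
        {γ : ι | ∀ k, v (φ₁ k) ≤ γ} hub with hδdef
      have hδub : ∀ k, v (φ₁ k) ≤ δ := WellFounded.min_mem _ _ hub
      have hδmin : ∀ α, α < δ → ∃ k, α < v (φ₁ k) := by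
        intro α hα
        have := WellFounded.not_lt_min
          (IsWellFounded.wf (r := ((· < ·) : ι → ι → Prop))) {γ : ι | ∀ k, v (φ₁ k) ≤ γ} (x := α)
        by_contra hc
        push_neg at hc
        exact this (fun k => (hc k)) hα
      refine ⟨((Sum.inr δ : (ℕ × ℕ) ⊕ ι) : OnePoint ((ℕ × ℕ) ⊕ ι)), mem_univ _,
        φ₀ ∘ φ₁, hφ₀s.comp hφ₁s, ?_⟩
      rw [heq, OnePoint.nhds_coe_eq]
      refine Filter.Tendsto.comp Filter.tendsto_map ?_
      rw [Filter.tendsto_def]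
      intro W hW
      obtain ⟨a, F, hF, ha, hsub⟩ := exists_core_subset_of_mem_nhds hwo hW
      rw [Filter.mem_atTop_sets]
      match a with
      | none =>
          refine ⟨0, fun k _ => hsub (inr_mem_core_iff.2
            ⟨fun α h => (nomatch h), hδub k⟩)⟩
      | some α =>
          obtain ⟨k₀, hk₀⟩ := hδmin α (ha α rfl)
          refine ⟨k₀, fun k hk => hsub (inr_mem_core_iff.2 ⟨?_, hδub k⟩)⟩
          rintro α' hα'
          injection hα' with hα'
          subst hα'
          exact lt_of_lt_of_le hk₀ (hβs.monotone hk)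
    · push_neg at hub
      refine ⟨OnePoint.infty, mem_univ _, φ₀ ∘ φ₁, hφ₀s.comp hφ₁s, ?_⟩
      rw [heq]
      refine tendsto_infty hwo ?_
      intro α G hG
      obtain ⟨k₀, hk₀⟩ := hub α
      refine Finite.subset (finite_Iio k₀) ?_
      intro k hk
      rcases hk with ⟨γ, hγle, hγ⟩ | ⟨p, -, hp2⟩
      · have hkk : v (φ₁ k) ≤ α := (Sum.inr_injective hγ).le.trans hγle
        by_contra hc
        simp only [mem_Iio, not_lt] at hc
        exact absurd (le_trans (hβs.monotone hc) hkk) (not_le.2 hk₀)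
      · exact (nomatch hp2)

omit hwo in
lemma pair_min'_max' {x y : ℕ} (hxy : x < y) :
    ∃ hne : ({x, y} : Finset ℕ).Nonempty,
      ({x, y} : Finset ℕ).min' hne = x ∧ ({x, y} : Finset ℕ).max' hne = y := by
  have hne : ({x, y} : Finset ℕ).Nonempty := ⟨x, by simp⟩
  refine ⟨hne, le_antisymm (Finset.min'_le _ x (by simp)) (Finset.le_min' _ _ _ ?_),
    le_antisymm (Finset.max'_le _ _ _ ?_) (Finset.le_max' _ y (by simp))⟩
  · intro z hz
    rcases Finset.mem_insert.1 hz with rfl | hz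
    · exact le_rfl
    · rw [Finset.mem_singleton.1 hz]
      exact hxy.le
  · intro z hz
    rcases Finset.mem_insert.1 hz with rfl | hz
    · exact hxy.le
    · rw [Finset.mem_singleton.1 hz]

lemma not_nseqcompact [WellFoundedLT ι] (hmono : ∀ i, StrictMono (f i))
    (hunb : ∀ g : ℕ → ℕ, ∃ i : ι, ¬ LeStar (f i) g) :
    letI := bvdTop ι f
    ¬ NSeqCompact 2 (OnePoint ((ℕ × ℕ) ⊕ ι)) := by
  letI := bvdTop ι f
  classical
  intro hN
  set h : Finset ℕ → OnePoint ((ℕ × ℕ) ⊕ ι) := fun s =>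
    if hs : s.Nonempty then
      ((Sum.inl (s.min' hs, s.max' hs) : (ℕ × ℕ) ⊕ ι) : OnePoint ((ℕ × ℕ) ⊕ ι))
    else OnePoint.infty with hhdef
  obtain ⟨B, hBinf, p, hconv⟩ := hN h
  set b : ℕ → ℕ := Nat.nth (· ∈ B) with hbdef
  have hbs : StrictMono b := Nat.nth_strictMono hBinf
  have hbB : ∀ i, b i ∈ B := fun i => Nat.nth_mem_of_infinite hBinf i
  have hpair : ∀ i j : ℕ, i < j →
      h {b i, b j} = ((Sum.inl (b i, b j) : (ℕ × ℕ) ⊕ ι) : OnePoint ((ℕ × ℕ) ⊕ ι)) := by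
    intro i j hij
    obtain ⟨hne, hmin, hmax⟩ := pair_min'_max' (hbs hij)
    rw [hhdef]
    dsimp only
    rw [dif_pos hne, hmin, hmax]
  have hcard : ∀ i j : ℕ, i < j → ({b i, b j} : Finset ℕ).card = 2 := fun i j hij =>
    Finset.card_pair (hbs hij).ne
  have hbig : ∀ (F : Finset ℕ) (i : ℕ), F.sup id < i → b i ∉ F := by
    intro F i hi hmem
    exact absurd (Finset.le_sup (f := id) hmem)
      (not_le.2 (lt_of_lt_of_le hi hbs.le_apply))
  have hsubB : ∀ (F : Finset ℕ) (i j : ℕ), F.sup id < i → i < j →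
      ↑({b i, b j} : Finset ℕ) ⊆ B \ ↑F := by
    intro F i j hFi hij z hz
    rcases Finset.mem_insert.1 hz with rfl | hz
    · exact ⟨hbB i, hbig F i hFi⟩
    · rw [Finset.mem_singleton.1 hz]
      exact ⟨hbB j, hbig F j (lt_trans hFi hij)⟩
  match p with
  | OnePoint.some (Sum.inl q) =>
      have hU : IsOpen ({((Sum.inl q : (ℕ × ℕ) ⊕ ι) : OnePoint ((ℕ × ℕ) ⊕ ι))} :
          Set (OnePoint ((ℕ × ℕ) ⊕ ι))) := by
        rw [← Set.image_singleton]
        exact OnePoint.isOpen_image_coe.2 (isOpen_singleton_inl q)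
      obtain ⟨F, hF⟩ := hconv _ (hU.mem_nhds rfl)
      set i : ℕ := F.sup id + q.1 + 1 with hidef
      have h1 : h {b i, b (i + 1)} ∈ ({((Sum.inl q : (ℕ × ℕ) ⊕ ι) : OnePoint _)} :
          Set (OnePoint ((ℕ × ℕ) ⊕ ι))) :=
        hF _ (hcard i (i + 1) (Nat.lt_succ_self i))
          (hsubB F i (i + 1) (by omega) (Nat.lt_succ_self i))
      rw [hpair i (i + 1) (Nat.lt_succ_self i)] at h1
      have h2 : (Sum.inl (b i, b (i + 1)) : (ℕ × ℕ) ⊕ ι) = Sum.inl q :=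
        OnePoint.coe_injective h1
      have h3 : b i = q.1 := by
        have := Sum.inl_injective h2
        exact congrArg Prod.fst this
      have h4 : q.1 < b i := lt_of_lt_of_le (by omega) hbs.le_apply
      omega
  | OnePoint.some (Sum.inr β) =>
      have hUopen : IsOpen ((↑) '' core f none β ∅ : Set (OnePoint ((ℕ × ℕ) ⊕ ι))) :=
        OnePoint.isOpen_image_coe.2 (isOpen_core finite_empty (fun α hα => (nomatch hα)))
      have hUmem : ((Sum.inr β : (ℕ × ℕ) ⊕ ι) : OnePoint ((ℕ × ℕ) ⊕ ι)) ∈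
          (↑) '' core f none β ∅ :=
        ⟨_, inr_mem_core_iff.2 ⟨fun α hα => (nomatch hα), le_rfl⟩, rfl⟩
      obtain ⟨F, hF⟩ := hconv _ (hUopen.mem_nhds hUmem)
      set i : ℕ := F.sup id + 1 with hidef
      set j : ℕ := F.sup id + f β (b i) + i + 1 with hjdef
      have hij : i < j := by omega
      have h1 : h {b i, b j} ∈ ((↑) '' core f none β ∅ : Set (OnePoint ((ℕ × ℕ) ⊕ ι))) :=
        hF _ (hcard i j hij) (hsubB F i j (by omega) hij)
      rw [hpair i j hij] at h1
      obtain ⟨y, hy, hyeq⟩ := h1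
      have h2 : (Sum.inl (b i, b j) : (ℕ × ℕ) ⊕ ι) ∈ core f none β ∅ := by
        rwa [OnePoint.coe_injective hyeq] at hy
      have h3 : b j ≤ f β (b i) := (inl_mem_core_iff.1 h2).1
      have h4 : f β (b i) < b j := by
        have : j ≤ b j := hbs.le_apply
        omega
      omega
  | OnePoint.infty =>
      -- the combinatorial heart
      set ix : ℕ → ℕ := fun n => Nat.find (⟨n, hbs.le_apply⟩ : ∃ i, n ≤ b i) with hixdef
      have hix : ∀ n, n ≤ b (ix n) := fun n => Nat.find_spec (⟨n, hbs.le_apply⟩ : ∃ i, n ≤ b i)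
      set g : ℕ → ℕ := fun n => b (ix n + 1) with hgdef
      obtain ⟨γ, hγ⟩ := hunb g
      have hγinf : {n | g n < f γ n}.Infinite := hγ
      have hJinf : {i | b (i + 1) ≤ f γ (b i)}.Infinite := by
        refine Set.infinite_of_forall_exists_gt ?_
        intro N
        obtain ⟨n, hn, hnN⟩ := hγinf.exists_gt (b N)
        refine ⟨ix n, ?_, ?_⟩
        · show b (ix n + 1) ≤ f γ (b (ix n))
          have h5 : g n < f γ n := hn
          have h6 : f γ n ≤ f γ (b (ix n)) := (hmono γ).monotone (hix n)
          have h7 : g n = b (ix n + 1) := rfl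
          omega
        · have : b N < b (ix n) := lt_of_lt_of_le hnN (hix n)
          exact hbs.lt_iff_lt.1 this
      have hBne : {δ : ι | {i | (b i, b (i + 1)) ∈ Bset f δ}.Infinite}.Nonempty := by
        refine ⟨γ, ?_⟩
        refine Set.Infinite.mono ?_ hJinf
        intro i hi
        exact hi
      set δ := WellFounded.min (IsWellFounded.wf (r := ((· < ·) : ι → ι → Prop))) _ hBne
        with hδdef
      have hδinf : {i | (b i, b (i + 1)) ∈ Bset f δ}.Infinite :=
        WellFounded.min_mem _ _ hBne
      have hδmin : ∀ α, α < δ → {i | (b i, b (i + 1)) ∈ Bset f α}.Finite := by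
        intro α hα
        rw [← Set.not_infinite]
        exact fun hc => WellFounded.not_lt_min
          (IsWellFounded.wf (r := ((· < ·) : ι → ι → Prop))) _ hc hα
      set σ : ℕ → ℕ := Nat.nth (fun i => (b i, b (i + 1)) ∈ Bset f δ) with hσdef
      have hσs : StrictMono σ := Nat.nth_strictMono hδinf
      set v : ℕ → ℕ × ℕ := fun k => (b (σ k), b (σ k + 1)) with hvdef
      have hv1 : ∀ k, v k ∈ Bset f δ := fun k => Nat.nth_mem_of_infinite hδinf k
      have hv2 : ∀ α, α < δ → {k | v k ∈ Bset f α}.Finite := by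
        intro α hα
        have hrw : {k | v k ∈ Bset f α} = σ ⁻¹' {i | (b i, b (i + 1)) ∈ Bset f α} := rfl
        rw [hrw]
        exact Set.Finite.preimage (Function.Injective.injOn hσs.injective) (hδmin α hα)
      have hv3 : ∀ q, {k | v k = q}.Finite := by
        intro q
        refine Set.Subsingleton.finite ?_
        intro k1 h1 k2 h2
        have e1 : b (σ k1) = q.1 := congrArg Prod.fst h1
        have e2 : b (σ k2) = q.1 := congrArg Prod.fst h2
        exact hσs.injective (hbs.injective (e1.trans e2.symm))
      set C : Set ((ℕ × ℕ) ⊕ ι) :=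
        insert (Sum.inr δ) (Set.range (fun k => (Sum.inl (v k) : (ℕ × ℕ) ⊕ ι))) with hCdef
      have hCcp : IsCompact C := (tendsto_inr' hwo hv1 hv2 hv3).isCompact_insert_range
      have hCcl : IsClosed C := by
        rw [← isOpen_compl_iff, isOpen_iff_mem_nhds]
        intro x hx
        match x with
        | Sum.inl q =>
            refine mem_of_superset ((isOpen_singleton_inl q).mem_nhds rfl) ?_
            intro y hy
            obtain rfl : y = Sum.inl q := hy
            exact hx
        | Sum.inr γ' =>
            have hne : γ' ≠ δ := fun hc => hx (hc ▸ Or.inl rfl)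
            rcases lt_or_gt_of_ne hne with hlt | hgt
            · set Fbad : Set (ℕ × ℕ) := v '' {k | v k ∈ Bset f γ'} with hFbad
              have hFfin : Fbad.Finite := (hv2 γ' hlt).image v
              have hopen : IsOpen (core f none γ' Fbad) :=
                isOpen_core hFfin (fun α hα => (nomatch hα))
              have hmem : Sum.inr γ' ∈ core f none γ' Fbad :=
                inr_mem_core_iff.2 ⟨fun α hα => (nomatch hα), le_rfl⟩
              refine mem_of_superset (hopen.mem_nhds hmem) ?_
              rintro y hy
              match y with
              | Sum.inr γ'' =>
                  obtain ⟨-, hle⟩ := inr_mem_core_iff.1 hy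
                  rintro (hc | ⟨k, hk⟩)
                  · exact absurd ((Sum.inr_injective hc) ▸ hle) (not_le.2 hlt)
                  · exact (nomatch hk)
              | Sum.inl q =>
                  obtain ⟨h1, -, h3⟩ := inl_mem_core_iff.1 hy
                  rintro (hc | ⟨k, hk⟩)
                  · exact (nomatch hc)
                  · have hvq : v k = q := Sum.inl_injective hk
                    refine h3 ⟨k, ?_, hvq⟩
                    show v k ∈ Bset f γ'
                    rw [hvq]
                    exact h1
            · have hopen : IsOpen (core f (some δ) γ' (∅ : Set (ℕ × ℕ))) :=
                isOpen_core finite_empty (fun α hα => by injection hα with hα; exact hα ▸ hgt)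
              have hmem : Sum.inr γ' ∈ core f (some δ) γ' ∅ :=
                inr_mem_core_iff.2 ⟨fun α hα => by injection hα with hα; exact hα ▸ hgt, le_rfl⟩
              refine mem_of_superset (hopen.mem_nhds hmem) ?_
              rintro y hy
              match y with
              | Sum.inr γ'' =>
                  obtain ⟨hlt2, -⟩ := inr_mem_core_iff.1 hy
                  rintro (hc | ⟨k, hk⟩)
                  · exact absurd (hlt2 δ rfl) (not_lt.2 (Sum.inr_injective hc).le)
                  · exact (nomatch hk)
              | Sum.inl q =>
                  obtain ⟨-, h2, -⟩ := inl_mem_core_iff.1 hy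
                  rintro (hc | ⟨k, hk⟩)
                  · exact (nomatch hc)
                  · exact h2 ((Sum.inl_injective hk) ▸ hv1 k)
      have hUmem : ((↑) '' C)ᶜ ∈ 𝓝 (OnePoint.infty : OnePoint ((ℕ × ℕ) ⊕ ι)) :=
        ((OnePoint.isOpen_compl_image_coe).2 ⟨hCcl, hCcp⟩).mem_nhds
          (fun hc => OnePoint.infty_notMem_image_coe hc)
      obtain ⟨F, hF⟩ := hconv _ hUmem
      set k : ℕ := F.sup id + 1 with hkdef
      have hik : F.sup id < σ k := lt_of_lt_of_le (by omega) hσs.le_apply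
      have h1 : h {b (σ k), b (σ k + 1)} ∈ ((↑) '' C)ᶜ :=
        hF _ (hcard (σ k) (σ k + 1) (Nat.lt_succ_self _))
          (hsubB F (σ k) (σ k + 1) hik (Nat.lt_succ_self _))
      rw [hpair (σ k) (σ k + 1) (Nat.lt_succ_self _)] at h1
      exact h1 ⟨Sum.inl (v k), Or.inr ⟨k, rfl⟩, rfl⟩

end BvD

section General

open Set Filter Topology

theorem nseqCompact_of_char_lt {X : Type} [TopologicalSpace X] [SeqCompactSpace X]
    (hchar : spaceCharacter X < bNumber) : NSeqCompact 2 X := by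
  classical
  intro c
  have hSC : ∀ (y : ℕ → X), ∃ (a : X) (φ : ℕ → ℕ), StrictMono φ ∧
      Filter.Tendsto (y ∘ φ) Filter.atTop (𝓝 a) := by
    intro y
    obtain ⟨a, -, φ, hφ, ht⟩ := SeqCompactSpace.isSeqCompact_univ (fun n => mem_univ (y n))
    exact ⟨a, φ, hφ, ht⟩
  choose lim sub hsubmono hsubtend using hSC
  -- iterated subsequences
  set ψ : ℕ → {e : ℕ → ℕ // StrictMono e} := fun n => Nat.rec ⟨id, strictMono_id⟩
    (fun n prev => ⟨prev.1 ∘ sub (fun k => c {n, prev.1 k}),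
      prev.2.comp (hsubmono _)⟩) n with hψdef
  set x : ℕ → X := fun n => lim (fun k => c {n, (ψ n).1 k}) with hxdef
  have hψsucc : ∀ n, (ψ (n + 1)).1 = (ψ n).1 ∘ sub (fun k => c {n, (ψ n).1 k}) :=
    fun n => rfl
  have htendn : ∀ n, Filter.Tendsto (fun k => c {n, (ψ (n + 1)).1 k})
      Filter.atTop (𝓝 (x n)) := fun n => hsubtend (fun k => c {n, (ψ n).1 k})
  set d : ℕ → ℕ := fun n => (ψ (n + 1)).1 n with hddef
  have hds : StrictMono d := by
    apply strictMono_nat_of_lt_succ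
    intro n
    have h2 : n < sub (fun k => c {n + 1, (ψ (n + 1)).1 k}) (n + 1) :=
      lt_of_lt_of_le (Nat.lt_succ_self n) (StrictMono.le_apply (hsubmono _))
    exact (ψ (n + 1)).2 h2
  have hcomp : ∀ (j n m : ℕ), ∃ m', m ≤ m' ∧ (ψ (n + j)).1 m = (ψ n).1 m' := by
    intro j
    induction j with
    | zero => exact fun n m => ⟨m, le_rfl, rfl⟩
    | succ j IH =>
        intro n m
        obtain ⟨m', hm', heq⟩ := IH n (sub (fun k => c {n + j, (ψ (n + j)).1 k}) m)
        refine ⟨m', le_trans (StrictMono.le_apply (hsubmono _)) hm', ?_⟩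
        exact heq
  have hdia : ∀ n k, n ≤ k → ∃ m, k ≤ m ∧ d k = (ψ (n + 1)).1 m := by
    intro n k hnk
    obtain ⟨m, hm, heq⟩ := hcomp (k - n) (n + 1) k
    have hidx : (n + 1) + (k - n) = k + 1 := by omega
    rw [hidx] at heq
    exact ⟨m, hm, heq⟩
  have htendd : ∀ n, Filter.Tendsto (fun k => c {n, d k}) Filter.atTop (𝓝 (x n)) := by
    intro n
    rw [Filter.tendsto_atTop']
    intro U hU
    obtain ⟨K, hK⟩ := Filter.tendsto_atTop'.1 (htendn n) U hU
    refine ⟨max n K, fun k hk => ?_⟩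
    obtain ⟨m, hm, heq⟩ := hdia n k (le_trans (le_max_left _ _) hk)
    rw [heq]
    exact hK m (le_trans (le_trans (le_max_right _ _) hk) hm)
  -- limit of the x's along a subsequence of the diagonal
  set a : X := lim (fun j => x (d j)) with hadef
  set ρ : ℕ → ℕ := sub (fun j => x (d j)) with hρdef
  have hρs : StrictMono ρ := hsubmono _
  have hρt : Filter.Tendsto (fun j => x (d (ρ j))) Filter.atTop (𝓝 a) :=
    hsubtend (fun j => x (d j))
  set e : ℕ → ℕ := fun j => d (ρ j) with hedef
  have hes : StrictMono e := hds.comp hρs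
  -- a small local base at `a`
  obtain ⟨ℬ, hmk, hBprop, hBbase⟩ := exists_pointCharacter_base a
  have hmklt : Cardinal.mk ℬ < bNumber :=
    lt_of_le_of_lt (hmk.le.trans (pointCharacter_le_spaceCharacter a)) hchar
  have hgex : ∀ (U : ℬ) (n : ℕ), ∃ K, x n ∈ U.1 → ∀ k, K ≤ k → c {n, d k} ∈ U.1 := by
    intro U n
    by_cases hx : x n ∈ U.1
    · obtain ⟨K, hK⟩ := Filter.tendsto_atTop'.1 (htendd n) U.1
        ((hBprop U.1 U.2).2.mem_nhds hx)
      exact ⟨K, fun _ k hk => hK k hk⟩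
    · exact ⟨0, fun hc => absurd hc hx⟩
  choose gU hgU using hgex
  obtain ⟨g₀, hg₀⟩ := bounded_of_mk_lt (G := Set.range gU)
    (lt_of_le_of_lt Cardinal.mk_range_le hmklt)
  -- the fast sequence
  set i : ℕ → ℕ := fun j => Nat.rec 0 (fun _ prev => prev + g₀ (e prev) + 1) j with hidef
  have his : StrictMono i := strictMono_nat_of_lt_succ (fun n => by
    have hs : i (n + 1) = i n + g₀ (e (i n)) + 1 := rfl
    omega)
  set b : ℕ → ℕ := fun j => e (i j) with hbdef
  have hbs : StrictMono b := hes.comp his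
  refine ⟨Set.range b, infinite_range_of_injective hbs.injective, a, ?_⟩
  intro V hV
  obtain ⟨U, hUℬ, hUV⟩ := hBbase V hV
  set U' : ℬ := ⟨U, hUℬ⟩ with hU'def
  have hE1 : {n | g₀ n < gU U' n}.Finite := hg₀ (gU U') (mem_range_self _)
  obtain ⟨J₀, hJ₀⟩ := Filter.tendsto_atTop'.1 hρt U ((hBprop U hUℬ).2.mem_nhds
    (hBprop U hUℬ).1)
  set F : Finset ℕ := (Finset.image b (Finset.range J₀)) ∪ hE1.toFinset with hFdef
  have hmain : ∀ l j, l < j → b l ∉ F → c {b l, b j} ∈ U := by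
    intro l j hlj hblF
    rw [hFdef, Finset.mem_union, not_or] at hblF
    have hlJ₀ : J₀ ≤ l := by
      by_contra hc
      exact hblF.1 (Finset.mem_image.2 ⟨l, Finset.mem_range.2 (not_le.1 hc), rfl⟩)
    have hxbl : x (b l) ∈ U := hJ₀ (i l) (le_trans hlJ₀ (le_trans his.le_apply le_rfl))
    have hgle : gU U' (b l) ≤ g₀ (b l) := by
      by_contra hc
      exact hblF.2 (hE1.mem_toFinset.2 (not_le.1 hc))
    have hklarge : gU U' (b l) ≤ ρ (i j) := by
      have h1 : i l + g₀ (b l) + 1 = i (l + 1) := rfl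
      have h2 : i (l + 1) ≤ i j := his.monotone hlj
      have h3 : i j ≤ ρ (i j) := hρs.le_apply
      omega
    have := hgU U' (b l) hxbl (ρ (i j)) hklarge
    exact this
  refine ⟨F, fun s hcard2 hsub => ?_⟩
  obtain ⟨z1, z2, hz12, rfl⟩ := Finset.card_eq_two.1 hcard2
  have h1 := hsub (show z1 ∈ (↑({z1, z2} : Finset ℕ) : Set ℕ) by simp)
  have h2 := hsub (show z2 ∈ (↑({z1, z2} : Finset ℕ) : Set ℕ) by simp)
  obtain ⟨l1, rfl⟩ := h1.1
  obtain ⟨l2, rfl⟩ := h2.1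
  have hne : l1 ≠ l2 := fun hc => hz12 (congrArg b hc)
  rcases lt_or_gt_of_ne hne with hl | hl
  · exact hUV (hmain l1 l2 hl (fun hc => h1.2 (Finset.mem_coe.2 hc)))
  · rw [Finset.pair_comm]
    exact hUV (hmain l2 l1 hl (fun hc => h2.2 (Finset.mem_coe.2 hc)))

end General


/-- The one-point compactification of the Burke–van Douwen space is a compact,
sequentially compact space of character `𝔟` that is not `2`-sequentially compact;
consequently `𝔟` is the least character of a sequentially compact space that is not
`2`-sequentially compact. -/
theorem burke_vanDouwen_onePoint (ι : Type) [LinearOrder ι] [WellFoundedLT ι]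
    (f : ι → ℕ → ℕ) (hcard : Cardinal.mk ι = bNumber)
    (hmono : ∀ i, StrictMono (f i))
    (hwo : ∀ i j : ι, i < j → LeStar (f i) (f j) ∧ ¬ LeStar (f j) (f i))
    (hunb : ∀ g : ℕ → ℕ, ∃ i : ι, ¬ LeStar (f i) g) :
    (letI : TopologicalSpace ((ℕ × ℕ) ⊕ ι) := bvdTop ι f
     CompactSpace (OnePoint ((ℕ × ℕ) ⊕ ι)) ∧
     SeqCompactSpace (OnePoint ((ℕ × ℕ) ⊕ ι)) ∧
     spaceCharacter (OnePoint ((ℕ × ℕ) ⊕ ι)) = bNumber ∧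
     ¬ NSeqCompact 2 (OnePoint ((ℕ × ℕ) ⊕ ι))) ∧
    bNumber = sInf {c | ∃ (X : Type) (_ : TopologicalSpace X),
      SeqCompactSpace X ∧ ¬ NSeqCompact 2 X ∧ spaceCharacter X = c} := by
  have hnei : Nonempty ι := Cardinal.mk_ne_zero_iff.1 (by rw [hcard]; exact bNumber_pos)
  have hwitness : (letI : TopologicalSpace ((ℕ × ℕ) ⊕ ι) := bvdTop ι f
      CompactSpace (OnePoint ((ℕ × ℕ) ⊕ ι)) ∧
      SeqCompactSpace (OnePoint ((ℕ × ℕ) ⊕ ι)) ∧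
      spaceCharacter (OnePoint ((ℕ × ℕ) ⊕ ι)) = bNumber ∧
      ¬ NSeqCompact 2 (OnePoint ((ℕ × ℕ) ⊕ ι))) := by
    letI : TopologicalSpace ((ℕ × ℕ) ⊕ ι) := bvdTop ι f
    exact ⟨inferInstance, BvD.seqCompactSpace hwo, BvD.spaceCharacter_eq hwo hcard hunb,
      BvD.not_nseqcompact hwo hmono hunb⟩
  refine ⟨hwitness, le_antisymm ?_ ?_⟩
  · refine le_csInf ?_ ?_
    · letI : TopologicalSpace ((ℕ × ℕ) ⊕ ι) := bvdTop ι f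
      exact ⟨bNumber, OnePoint ((ℕ × ℕ) ⊕ ι), inferInstance,
        hwitness.2.1, hwitness.2.2.2, hwitness.2.2.1⟩
    · intro cc hcc
      obtain ⟨Y, tY, hseq, hnot, hchar⟩ := hcc
      by_contra hlt
      push_neg at hlt
      letI := tY
      haveI := hseq
      refine hnot (nseqCompact_of_char_lt ?_)
      rw [hchar]
      exact hlt
  · refine csInf_le (OrderBot.bddBelow _) ?_
    letI : TopologicalSpace ((ℕ × ℕ) ⊕ ι) := bvdTop ι f
    exact ⟨OnePoint ((ℕ × ℕ) ⊕ ι), inferInstance,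
      hwitness.2.1, hwitness.2.2.2, hwitness.2.2.1⟩
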